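/- Let k ≥ 3 be an integer and λ a positive divisor of k. The quotient of the presented group ⟨ℓ, x₁, …, x_k ∣ [x_i, x_j] = 1 for all 1 ≤ i, j ≤ k, ℓ⁻¹x_iℓ = x_{i+1} for 1 ≤ i ≤ k−1, ℓ⁻¹x_kℓ = x₁⟩ by the normal closure of the set of elements x_i x_{i+λ}⁻¹ (indices taken modulo k) is isomorphic to the presented group K_λ = ⟨ℓ, x ∣ [x, ℓ^λ] = 1, [x, ℓ⁻ⁱxℓⁱ] = 1 for i = 1, …, λ−1⟩. -/

import Mathlib

/-!
Writing `cₙ = ℓ⁻ⁿ x ℓⁿ`, the quotient is generated by `ℓ` and `x = x₀`, since `xᵢ = cᵢ`. The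
relators `xᵢ = x_{i+λ}` say that `x` commutes with `ℓ^λ`, and then `[xᵢ, x_j] = 1` reduces, after
conjugating by a power of `ℓ` and reducing indices mod `λ`, to `[x, cᵢ] = 1` for `0 < i < λ`.
Conversely, in `K_λ` the conjugates `cₙ` are `λ`-periodic in `n` and pairwise commute, and since
`λ ∣ k` they are also `k`-periodic, so `ℓ ↦ ℓ, xᵢ ↦ cᵢ` inverts `ℓ ↦ ℓ, x ↦ x₀`.
-/
open scoped commutatorElement

/-- The relators of `⟨ℓ, x₁, …, x_k ∣ [xᵢ, x_j] = 1 (1 ≤ i, j ≤ k),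
ℓ⁻¹xᵢℓ = x_{i+1} (1 ≤ i ≤ k-1), ℓ⁻¹x_kℓ = x₁⟩`, with `ℓ = none` and the `xᵢ`
(0-indexed) the elements `some i`, `i : Fin k`. -/
def bigRels (k : ℕ) : Set (FreeGroup (Option (Fin k))) :=
  let l : FreeGroup (Option (Fin k)) := FreeGroup.of none
  let x : Fin k → FreeGroup (Option (Fin k)) := fun i => FreeGroup.of (some i)
  (Set.range fun p : Fin k × Fin k => ⁅x p.1, x p.2⁆) ∪
    (Set.range fun i : Fin k =>
      l⁻¹ * x i * l * (x ⟨((i : ℕ) + 1) % k, Nat.mod_lt _ i.pos⟩)⁻¹)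

/-- The relators of `K_k = ⟨ℓ, x ∣ [x, ℓ^k] = 1, [x, ℓ⁻ⁱxℓⁱ] = 1 (i = 1, …, k-1)⟩`,
with generators `ℓ = 0`, `x = 1`. -/
def KRels (k : ℕ) : Set (FreeGroup (Fin 2)) :=
  let l : FreeGroup (Fin 2) := FreeGroup.of 0
  let x : FreeGroup (Fin 2) := FreeGroup.of 1
  {⁅x, l ^ k⁆} ∪
    Set.range (fun i : Fin (k - 1) => ⁅x, (l ^ ((i : ℕ) + 1))⁻¹ * x * l ^ ((i : ℕ) + 1)⁆)

namespace PresentedGroup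

variable {α : Type*}

lemma lift_of_eq_one_of_mem {rels : Set (FreeGroup α)} {r : FreeGroup α} (h : r ∈ rels) :
    FreeGroup.lift (of : α → PresentedGroup rels) r = 1 := by
  rw [← FreeGroup.lift_unique (mk rels) (f := of) fun _ => rfl]
  exact one_of_mem h

noncomputable def quotientNormalClosureEquiv (R T : Set (FreeGroup α)) :
    PresentedGroup R ⧸ Subgroup.normalClosure (mk R '' T) ≃* PresentedGroup (R ∪ T) :=
  let N := Subgroup.normalClosure R
  have hmap : (Subgroup.normalClosure (R ∪ T)).map (QuotientGroup.mk' N)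
      = Subgroup.normalClosure (QuotientGroup.mk' N '' T) := by
    have hR : QuotientGroup.mk' N '' R ⊆ {1} := by
      rintro _ ⟨r, hr, rfl⟩
      exact one_of_mem hr
    rw [Subgroup.map_normalClosure _ _ (QuotientGroup.mk'_surjective _), Set.image_union,
      Subgroup.normalClosure_union, Subgroup.normalClosure_eq_bot_iff.mpr hR, bot_sup_eq]
  (QuotientGroup.quotientMulEquivOfEq hmap.symm).trans
    (QuotientGroup.quotientQuotientEquivQuotient _ _
      (Subgroup.normalClosure_mono Set.subset_union_left))

end PresentedGroup

section ConjPow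

variable {G : Type*} [Group G] {l x : G} {lam : ℕ}

def conjPow (l x : G) (n : ℕ) : G := (l ^ n)⁻¹ * x * l ^ n

@[simp]
lemma conjPow_zero (l x : G) : conjPow l x 0 = x := by simp [conjPow]

lemma inv_mul_conjPow_mul (l x : G) (n : ℕ) : l⁻¹ * conjPow l x n * l = conjPow l x (n + 1) := by
  simp only [conjPow, pow_succ, mul_inv_rev, mul_assoc]

lemma conjPow_conjPow (l x : G) (m n : ℕ) :
    conjPow l (conjPow l x m) n = conjPow l x (m + n) := by
  simp only [conjPow, pow_add, mul_inv_rev, mul_assoc]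

lemma map_conjPow {H : Type*} [Group H] (f : G →* H) (l x : G) (n : ℕ) :
    f (conjPow l x n) = conjPow (f l) (f x) n := by
  simp only [conjPow, map_mul, map_inv, map_pow]

lemma conjPow_mod (hx : Commute x (l ^ lam)) (n : ℕ) : conjPow l x (n % lam) = conjPow l x n := by
  have hq := (hx.pow_right (n / lam)).symm.inv_mul_cancel
  have hn : l ^ n = (l ^ lam) ^ (n / lam) * l ^ (n % lam) := by
    rw [← pow_mul, ← pow_add, Nat.div_add_mod]
  calc conjPow l x (n % lam)
      = (l ^ (n % lam))⁻¹ * (((l ^ lam) ^ (n / lam))⁻¹ * x * (l ^ lam) ^ (n / lam)) *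
          l ^ (n % lam) := by rw [hq, conjPow]
    _ = conjPow l x n := by rw [conjPow, hn]; group

lemma conjPow_mod_of_dvd {k : ℕ} (hx : Commute x (l ^ lam)) (hdvd : lam ∣ k) (n : ℕ) :
    conjPow l x (n % k) = conjPow l x n := by
  rw [← conjPow_mod hx, Nat.mod_mod_of_dvd _ hdvd, conjPow_mod hx]

lemma commute_conjPow (hlam : 0 < lam) (hx : Commute x (l ^ lam))
    (hconj : ∀ i : Fin (lam - 1), Commute x (conjPow l x (i + 1))) (m n : ℕ) :
    Commute (conjPow l x m) (conjPow l x n) := by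
  wlog hmn : m ≤ n generalizing m n
  · exact (this n m (by omega)).symm
  obtain ⟨d, rfl⟩ := Nat.exists_eq_add_of_le hmn
  have hxd : Commute x (conjPow l x d) := by
    rw [← conjPow_mod hx]
    rcases h : d % lam with _ | i
    · simp only [conjPow_zero, Commute.refl]
    · exact hconj ⟨i, by have := Nat.mod_lt d hlam; omega⟩
  have := hxd.conj (l ^ m)⁻¹
  rw [inv_inv] at this
  change Commute (conjPow l x m) (conjPow l (conjPow l x d) m) at this
  rwa [conjPow_conjPow, add_comm] at this

end ConjPow

def shiftMod {k : ℕ} (i : Fin k) (m : ℕ) : Fin k := ⟨(i + m) % k, Nat.mod_lt _ i.pos⟩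

section Shift

variable {k : ℕ}

@[simp]
lemma shiftMod_zero (i : Fin k) : shiftMod i 0 = i := Fin.ext (Nat.mod_eq_of_lt i.isLt)

lemma shiftMod_shiftMod (i : Fin k) (m n : ℕ) : shiftMod (shiftMod i m) n = shiftMod i (m + n) :=
  Fin.ext (by simp only [shiftMod, Nat.mod_add_mod, add_assoc])

lemma conjPow_eq_shiftMod {G : Type*} [Group G] {l : G} {y : Fin k → G}
    (hy : ∀ i, l⁻¹ * y i * l = y (shiftMod i 1)) (i : Fin k) (m : ℕ) :
    conjPow l (y i) m = y (shiftMod i m) := by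
  induction m with
  | zero => simp
  | succ m ih => rw [← inv_mul_conjPow_mul, ih, hy, shiftMod_shiftMod]

end Shift

def periodRels (k lam : ℕ) : Set (FreeGroup (Option (Fin k))) :=
  Set.range fun i : Fin k => FreeGroup.of (some i) * (FreeGroup.of (some (shiftMod i lam)))⁻¹

lemma lift_eq_one_of_mem_bigRels_union_periodRels_iff {G : Type*} [Group G] {k lam : ℕ}
    (f : Option (Fin k) → G) :
    (∀ r ∈ bigRels k ∪ periodRels k lam, FreeGroup.lift f r = 1) ↔
      (∀ i j, Commute (f (some i)) (f (some j))) ∧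
      (∀ i, (f none)⁻¹ * f (some i) * f none = f (some (shiftMod i 1))) ∧
      ∀ i, f (some i) = f (some (shiftMod i lam)) := by
  simp only [bigRels, periodRels, Set.mem_union, or_imp, forall_and, Set.forall_mem_range,
    Prod.forall, map_commutatorElement, map_mul, map_inv, FreeGroup.lift_apply_of,
    commutatorElement_eq_one_iff_commute, mul_inv_eq_one, shiftMod, and_assoc]

lemma lift_eq_one_of_mem_KRels_iff {G : Type*} [Group G] {lam : ℕ} (f : Fin 2 → G) :
    (∀ r ∈ KRels lam, FreeGroup.lift f r = 1) ↔
      Commute (f 1) (f 0 ^ lam) ∧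
        ∀ i : Fin (lam - 1), Commute (f 1) (conjPow (f 0) (f 1) (i + 1)) := by
  simp only [KRels, Set.mem_union, Set.mem_singleton_iff, or_imp, forall_and, forall_eq,
    Set.forall_mem_range, map_commutatorElement, map_mul, map_inv, map_pow,
    FreeGroup.lift_apply_of, commutatorElement_eq_one_iff_commute, conjPow]

lemma commute_pow_of_conjPow_eq {G : Type*} [Group G] {l x : G} {n : ℕ}
    (h : conjPow l x n = x) : Commute x (l ^ n) :=
  calc x * l ^ n = l ^ n * conjPow l x n := by rw [conjPow]; group
    _ = l ^ n * x := by rw [h]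

section Isomorphism

variable {k lam : ℕ}

lemma KRels_relations :
    let l : PresentedGroup (KRels lam) := .of 0
    let x : PresentedGroup (KRels lam) := .of 1
    Commute x (l ^ lam) ∧ ∀ i : Fin (lam - 1), Commute x (conjPow l x (i + 1)) :=
  (lift_eq_one_of_mem_KRels_iff _).1 fun _ => PresentedGroup.lift_of_eq_one_of_mem

lemma bigRels_union_periodRels_relations :
    let y : Fin k → PresentedGroup (bigRels k ∪ periodRels k lam) := fun i => .of (some i)
    (∀ i j, Commute (y i) (y j)) ∧ (∀ i, (.of none)⁻¹ * y i * .of none = y (shiftMod i 1)) ∧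
      ∀ i, y i = y (shiftMod i lam) :=
  (lift_eq_one_of_mem_bigRels_union_periodRels_iff _).1 fun _ =>
    PresentedGroup.lift_of_eq_one_of_mem

noncomputable def periodicToK (hlam : 0 < lam) (hdvd : lam ∣ k) :
    PresentedGroup (bigRels k ∪ periodRels k lam) →* PresentedGroup (KRels lam) :=
  PresentedGroup.toGroup (f := fun a => a.elim (.of 0) fun i => conjPow (.of 0) (.of 1) i) <| by
    obtain ⟨hpow, hconj⟩ := KRels_relations (lam := lam)
    rw [lift_eq_one_of_mem_bigRels_union_periodRels_iff]
    refine ⟨fun i j => commute_conjPow hlam hpow hconj _ _, fun i => ?_, fun i => ?_⟩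
    · dsimp only [Option.elim, shiftMod]
      rw [inv_mul_conjPow_mul]
      exact (conjPow_mod_of_dvd hpow hdvd _).symm
    · dsimp only [Option.elim, shiftMod]
      rw [conjPow_mod_of_dvd hpow hdvd, ← conjPow_mod hpow (i + lam), Nat.add_mod_right,
        conjPow_mod hpow]

noncomputable def kToPeriodic (hk : 0 < k) :
    PresentedGroup (KRels lam) →* PresentedGroup (bigRels k ∪ periodRels k lam) :=
  PresentedGroup.toGroup (f := ![.of none, .of (some ⟨0, hk⟩)]) <| by
    obtain ⟨hcomm, hshift, hper⟩ := bigRels_union_periodRels_relations (k := k) (lam := lam)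
    rw [lift_eq_one_of_mem_KRels_iff]
    refine ⟨commute_pow_of_conjPow_eq ?_, fun i => ?_⟩
    · simp [conjPow_eq_shiftMod hshift, ← hper]
    · simp [conjPow_eq_shiftMod hshift, hcomm]

lemma kToPeriodic_comp_periodicToK (hk : 0 < k) (hlam : 0 < lam) (hdvd : lam ∣ k) :
    (kToPeriodic hk).comp (periodicToK hlam hdvd) = MonoidHom.id _ := by
  obtain ⟨-, hshift, -⟩ := bigRels_union_periodRels_relations (k := k) (lam := lam)
  refine PresentedGroup.ext fun a => ?_
  cases a with
  | none => simp [periodicToK, kToPeriodic, PresentedGroup.toGroup.of]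
  | some i =>
    simp only [periodicToK, kToPeriodic, MonoidHom.comp_apply, PresentedGroup.toGroup.of,
      Option.elim, map_conjPow]
    simp [conjPow_eq_shiftMod hshift, shiftMod, Nat.mod_eq_of_lt i.isLt]

lemma periodicToK_comp_kToPeriodic (hk : 0 < k) (hlam : 0 < lam) (hdvd : lam ∣ k) :
    (periodicToK hlam hdvd).comp (kToPeriodic hk) = MonoidHom.id _ :=
  PresentedGroup.ext fun a => by
    fin_cases a <;> simp [periodicToK, kToPeriodic, PresentedGroup.toGroup.of]

noncomputable def periodicEquivK (hk : 0 < k) (hlam : 0 < lam) (hdvd : lam ∣ k) :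
    PresentedGroup (bigRels k ∪ periodRels k lam) ≃* PresentedGroup (KRels lam) :=
  MonoidHom.toMulEquiv _ _ (kToPeriodic_comp_periodicToK hk hlam hdvd)
    (periodicToK_comp_kToPeriodic hk hlam hdvd)

end Isomorphism

theorem big_presentation_quotient_iso_Klambda_general (k lam : ℕ) (hk : 3 ≤ k)
    (hdvd : lam ∣ k) :
    Nonempty
      ((PresentedGroup (bigRels k) ⧸ Subgroup.normalClosure
          (Set.range fun i : Fin k =>
            (PresentedGroup.of (some i) : PresentedGroup (bigRels k)) *
              (PresentedGroup.of (some ⟨((i : ℕ) + lam) % k, Nat.mod_lt _ i.pos⟩))⁻¹)) ≃*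
        PresentedGroup (KRels lam)) := by
  have hk0 : 0 < k := by omega
  have hrels : (Set.range fun i : Fin k =>
      (PresentedGroup.of (some i) : PresentedGroup (bigRels k)) *
        (PresentedGroup.of (some ⟨((i : ℕ) + lam) % k, Nat.mod_lt _ i.pos⟩))⁻¹)
      = PresentedGroup.mk (bigRels k) '' periodRels k lam := by
    rw [periodRels, ← Set.range_comp]
    rfl
  rw [hrels]
  exact ⟨(PresentedGroup.quotientNormalClosureEquiv _ _).trans
    (periodicEquivK hk0 (Nat.pos_of_dvd_of_pos hdvd hk0) hdvd)⟩

/-- For `k ≥ 3` and `λ` a positive divisor of `k`, the quotient of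
`⟨ℓ, x₁, …, x_k ∣ [xᵢ, x_j] = 1, ℓ⁻¹xᵢℓ = x_{i+1 mod k}⟩` by the normal closure of
the elements `xᵢ x_{i+λ}⁻¹` (indices mod `k`) is isomorphic to
`K_λ = ⟨ℓ, x ∣ [x, ℓ^λ] = 1, [x, ℓ⁻ⁱxℓⁱ] = 1 (i = 1, …, λ-1)⟩`. -/
theorem big_presentation_quotient_iso_Klambda (k lam : ℕ) (hk : 3 ≤ k)
    (hlam : 0 < lam) (hdvd : lam ∣ k) :
    Nonempty
      ((PresentedGroup (bigRels k) ⧸ Subgroup.normalClosure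
          (Set.range fun i : Fin k =>
            (PresentedGroup.of (some i) : PresentedGroup (bigRels k)) *
              (PresentedGroup.of (some ⟨((i : ℕ) + lam) % k, Nat.mod_lt _ i.pos⟩))⁻¹)) ≃*
        PresentedGroup (KRels lam)) :=
  big_presentation_quotient_iso_Klambda_general k lam hk hdvd
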